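/- Let w_1, ..., w_m be m distinct words, all of the same 'diameter' δ, over a finite alphabet with strictly-less-than-1 letter-diameters. For each composition (t_1,...,t_m) of n (nonnegative integers with ∑ t_j = n), every concatenation using t_j copies of w_j in some order yields a word of diameter δ^n, distinct concatenation orders of the multiset giving distinct words. Hence the number of distinct words of diameter δ^n obtainable as concatenations of n words from {w_1,...,w_m} is at least m^n. -/

import Mathlib

/-- The `diameter` of a word: the product of the letter-diameters of its letters. -/
def diamWord {N : ℕ} (d : Fin N → ℝ) (w : List (Fin N)) : ℝ := (w.map d).prod

section Aux

variable {N : ℕ} {d : Fin N → ℝ}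

lemma diamWord_pos (hd : ∀ ℓ, 0 < d ℓ ∧ d ℓ < 1) : ∀ l : List (Fin N), 0 < diamWord d l := by
  intro l
  induction l with
  | nil => simp [diamWord]
  | cons x xs ih =>
    simp only [diamWord, List.map_cons, List.prod_cons]
    exact mul_pos (hd x).1 ih

lemma diamWord_le_one (hd : ∀ ℓ, 0 < d ℓ ∧ d ℓ < 1) : ∀ l : List (Fin N), diamWord d l ≤ 1 := by
  intro l
  induction l with
  | nil => simp [diamWord]
  | cons x xs ih =>
    simp only [diamWord, List.map_cons, List.prod_cons]
    exact mul_le_one₀ (le_of_lt (hd x).2) (le_of_lt (diamWord_pos hd xs)) ih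

lemma diamWord_lt_one (hd : ∀ ℓ, 0 < d ℓ ∧ d ℓ < 1) {l : List (Fin N)} (hl : l ≠ []) : diamWord d l < 1 := by
  cases l with
  | nil => exact absurd rfl hl
  | cons x xs =>
    simp only [diamWord, List.map_cons, List.prod_cons]
    calc d x * (xs.map d).prod ≤ d x * 1 :=
          mul_le_mul_of_nonneg_left (diamWord_le_one hd xs) (le_of_lt (hd x).1)
      _ = d x := mul_one _
      _ < 1 := (hd x).2

lemma diamWord_append (a b : List (Fin N)) :
    diamWord d (a ++ b) = diamWord d a * diamWord d b := by
  simp [diamWord]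

lemma diamWord_flatten (L : List (List (Fin N))) :
    diamWord d L.flatten = (L.map (diamWord d)).prod := by
  induction L with
  | nil => simp [diamWord]
  | cons a L ih => simp [List.flatten_cons, diamWord_append, ih]

lemma blocks_inj (hd : ∀ ℓ, 0 < d ℓ ∧ d ℓ < 1) {δ : ℝ} (hδ0 : 0 < δ) :
    ∀ (L₁ L₂ : List (List (Fin N))), (∀ b ∈ L₁, diamWord d b = δ) →
      (∀ b ∈ L₂, diamWord d b = δ) → L₁.length = L₂.length →
      L₁.flatten = L₂.flatten → L₁ = L₂ := by
  intro L₁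
  induction L₁ with
  | nil =>
    intro L₂ _ _ hlen _
    cases L₂ with
    | nil => rfl
    | cons b L₂ => simp at hlen
  | cons a L₁ ih =>
    intro L₂ h₁ h₂ hlen hflat
    cases L₂ with
    | nil => simp at hlen
    | cons b L₂ =>
      simp only [List.flatten_cons] at hflat
      have hab : a = b := by
        rcases List.append_eq_append_iff.mp hflat with ⟨c, hc, _⟩ | ⟨c, hc, _⟩
        · -- b = a ++ c
          have hda : diamWord d a = δ := h₁ a (by simp)
          have hdb : diamWord d b = δ := h₂ b (by simp)
          have : δ = δ * diamWord d c := by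
            conv_lhs => rw [← hdb, hc, diamWord_append, hda]
          have hc1 : diamWord d c = 1 :=
            (mul_left_cancel₀ (ne_of_gt hδ0) (by rw [mul_one]; exact this)).symm
          have hcnil : c = [] := by
            by_contra hne
            exact absurd hc1 (ne_of_lt (diamWord_lt_one hd hne))
          rw [hc, hcnil, List.append_nil]
        · have hda : diamWord d a = δ := h₁ a (by simp)
          have hdb : diamWord d b = δ := h₂ b (by simp)
          have : δ = δ * diamWord d c := by
            conv_lhs => rw [← hda, hc, diamWord_append, hdb]
          have hc1 : diamWord d c = 1 :=
            (mul_left_cancel₀ (ne_of_gt hδ0) (by rw [mul_one]; exact this)).symm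
          have hcnil : c = [] := by
            by_contra hne
            exact absurd hc1 (ne_of_lt (diamWord_lt_one hd hne))
          rw [hc, hcnil, List.append_nil]
      subst hab
      have hrest : L₁.flatten = L₂.flatten := by
        exact (List.append_cancel_left hflat)
      have : L₁ = L₂ :=
        ih L₂ (fun b hb => h₁ b (by simp [hb])) (fun b hb => h₂ b (by simp [hb]))
          (by simpa using hlen) hrest
      rw [this]

end Aux

/-- Concatenating `n` blocks chosen among `m` distinct words of common diameter `δ` yields,
by unique parsing, at least `m^n` distinct words of diameter `δ^n`. -/
theorem stmt11 {N n m : ℕ} (d : Fin N → ℝ) (hd : ∀ ℓ, 0 < d ℓ ∧ d ℓ < 1)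
    (δ : ℝ) (hδ0 : 0 < δ) (hδ1 : δ < 1)
    (w : Fin m → List (Fin N)) (hwinj : Function.Injective w)
    (hw : ∀ j, diamWord d (w j) = δ) :
    (∀ s : Fin n → Fin m, diamWord d (List.ofFn fun j => w (s j)).flatten = δ ^ n) ∧
    m ^ n ≤ Set.ncard {u : List (Fin N) |
      diamWord d u = δ ^ n ∧ ∃ s : Fin n → Fin m, u = (List.ofFn fun j => w (s j)).flatten} := by
  have part1 : ∀ s : Fin n → Fin m,
      diamWord d (List.ofFn fun j => w (s j)).flatten = δ ^ n := by
    intro s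
    rw [diamWord_flatten, List.map_ofFn]
    simp [Function.comp, hw, List.prod_ofFn]
  refine ⟨part1, ?_⟩
  set F : (Fin n → Fin m) → List (Fin N) :=
    fun s => (List.ofFn fun j => w (s j)).flatten with hF
  have hFinj : Function.Injective F := by
    intro s s' hss
    have := blocks_inj hd hδ0 (List.ofFn fun j => w (s j)) (List.ofFn fun j => w (s' j))
      (by intro b hb; rcases List.mem_ofFn.mp hb with ⟨j, rfl⟩; exact hw _)
      (by intro b hb; rcases List.mem_ofFn.mp hb with ⟨j, rfl⟩; exact hw _)
      (by simp) hss
    have h2 : (fun j => w (s j)) = fun j => w (s' j) := List.ofFn_injective this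
    funext j
    exact hwinj (congrFun h2 j)
  have hset : {u : List (Fin N) |
      diamWord d u = δ ^ n ∧ ∃ s : Fin n → Fin m, u = (List.ofFn fun j => w (s j)).flatten}
      = Set.range F := by
    ext u
    constructor
    · rintro ⟨-, s, rfl⟩; exact ⟨s, rfl⟩
    · rintro ⟨s, rfl⟩; exact ⟨part1 s, s, rfl⟩
  rw [hset, ← Set.image_univ, Set.ncard_image_of_injective _ hFinj, Set.ncard_univ,
    Nat.card_eq_fintype_card]
  simp
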